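/- arXiv:1807.10382 — 4 statements merged into one kernel-verified Lean document; each statement's English description precedes it below -/
import Mathlib

section
/- Let Ω = {1,...,8} encode the eight sign patterns (a,b,c) ∈ {+,-}³ (1 = +++, 2 = ++-, 3 = +-+, 4 = +--, 5 = -++, 6 = -+-, 7 = --+, 8 = ---). Suppose Q is a finitely additive real-valued function on subsets of Ω with Q(Ω) = 1, Q{3,4,5,6} = 1/2 (the event a ≠ b), Q{1,4,5,8} = (2+√2)/4 (the event b = c), and Q{1,3,6,8} = (2-√2)/4 (the event a = c). Then Q({3,6}) = (1-√2)/4, which is negative. In particular Q is not a traditional probability distribution. -/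
/-- Schneider's Bell scenario: Ω = {1,...,8} encodes sign patterns (a,b,c),
here as Fin 8 with 0=+++, 1=++-, 2=+-+, 3=+--, 4=-++, 5=-+-, 6=--+, 7=---.
Any finitely additive Q with Q(Ω)=1, Q[a≠b]=1/2, Q[b=c]=(2+√2)/4 and
Q[a=c]=(2-√2)/4 must have Q({3,6}) = (1-√2)/4 < 0 (indices {2,5}), so Q is
not traditional. -/
theorem schneider_negative (Q : Set (Fin 8) → ℝ)
    (hQ1 : Q Set.univ = 1)
    (hQ2 : ∀ e₁ e₂ : Set (Fin 8), Disjoint e₁ e₂ → Q (e₁ ∪ e₂) = Q e₁ + Q e₂)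
    (hab : Q {2, 3, 4, 5} = 1/2)
    (hbc : Q {0, 3, 4, 7} = (2 + Real.sqrt 2)/4)
    (hac : Q {0, 2, 5, 7} = (2 - Real.sqrt 2)/4) :
    Q {2, 5} = (1 - Real.sqrt 2)/4 ∧ Q {2, 5} < 0 ∧ ¬ (∀ e, 0 ≤ Q e) := by
  have d1 : Disjoint ({2, 5} : Set (Fin 8)) {3, 4} := by
    rw [Set.disjoint_left]; decide
  have d2 : Disjoint ({2, 5} : Set (Fin 8)) {0, 7} := by
    rw [Set.disjoint_left]; decide
  have d3 : Disjoint ({3, 4} : Set (Fin 8)) {0, 7} := by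
    rw [Set.disjoint_left]; decide
  have e1 : ({2, 5} : Set (Fin 8)) ∪ {3, 4} = {2, 3, 4, 5} := by ext x; simp; tauto
  have e2 : ({2, 5} : Set (Fin 8)) ∪ {0, 7} = {0, 2, 5, 7} := by ext x; simp; tauto
  have e3 : ({3, 4} : Set (Fin 8)) ∪ {0, 7} = {0, 3, 4, 7} := by ext x; simp; tauto
  have h1 := hQ2 _ _ d1; rw [e1, hab] at h1
  have h2 := hQ2 _ _ d2; rw [e2, hac] at h2
  have h3 := hQ2 _ _ d3; rw [e3, hbc] at h3
  have key : Q {2, 5} = (1 - Real.sqrt 2)/4 := by linarith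
  have hs : (1 : ℝ) < Real.sqrt 2 := by
    have := Real.lt_sqrt (x := 1) (y := 2) (by norm_num)
    rw [this]; norm_num
  have hneg : Q {2, 5} < 0 := by rw [key]; linarith
  exact ⟨key, hneg, fun h => absurd (h {2, 5}) (not_le.mpr hneg)⟩
end

section
/- There is no traditional probability distribution P on Ω = {1,...,8} (encoding sign patterns (a,b,c) ∈ {+,-}³ as in Schneider's setup) satisfying P{3,4,5,6} = 1/2, P{1,4,5,8} = (2+√2)/4, and P{1,3,6,8} = (2-√2)/4. -/
/-- There is no traditional probability distribution on Ω = {1,...,8}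
(sign patterns encoded as Fin 8: 0=+++, 1=++-, 2=+-+, 3=+--, 4=-++, 5=-+-,
6=--+, 7=---) with P[a≠b]=1/2, P[b=c]=(2+√2)/4 and P[a=c]=(2-√2)/4. -/
theorem schneider_no_traditional :
    ¬ ∃ p : Fin 8 → ℝ,
      (∀ ω, 0 ≤ p ω) ∧ ∑ ω, p ω = 1 ∧
      p 2 + p 3 + p 4 + p 5 = 1/2 ∧
      p 0 + p 3 + p 4 + p 7 = (2 + Real.sqrt 2)/4 ∧
      p 0 + p 2 + p 5 + p 7 = (2 - Real.sqrt 2)/4 := by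
  rintro ⟨p, hpos, hsum, h1, h2, h3⟩
  rw [Fin.sum_univ_eight] at hsum
  have hs : (1:ℝ) < Real.sqrt 2 := by
    nlinarith [Real.sq_sqrt (by norm_num : (2:ℝ) ≥ 0), Real.sqrt_nonneg 2]
  have := hpos 2
  have := hpos 5
  linarith
end

section
/- Any signed probability distribution R on Ω = {1,...,8} satisfying the (AB) constraints R{1,2} = R{3,4} = R{5,6} = R{7,8} = 1/4, the (BC) constraints R{1,5} = R{4,8} = (2+√2)/8 and R{2,6} = R{3,7} = (2-√2)/8, and the (AC) constraints R{1,3} = R{6,8} = (2-√2)/8 and R{2,4} = R{5,7} = (2+√2)/8, must satisfy R({3}) + R({6}) = (1-√2)/4 < 0. -/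
/-- Any signed probability distribution on Ω = {1,...,8} (encoded as Fin 8,
0=outcome 1, ..., 7=outcome 8) satisfying the (AB), (BC) and (AC) constraints
must give R({3}) + R({6}) = (1-√2)/4, which is negative. -/
theorem schneider_forced_negativity (r : Fin 8 → ℝ)
    (hsum : ∑ ω, r ω = 1)
    -- (AB)
    (hab1 : r 0 + r 1 = 1/4) (hab2 : r 2 + r 3 = 1/4)
    (hab3 : r 4 + r 5 = 1/4) (hab4 : r 6 + r 7 = 1/4)
    -- (BC)
    (hbc1 : r 0 + r 4 = (2 + Real.sqrt 2)/8) (hbc2 : r 3 + r 7 = (2 + Real.sqrt 2)/8)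
    (hbc3 : r 1 + r 5 = (2 - Real.sqrt 2)/8) (hbc4 : r 2 + r 6 = (2 - Real.sqrt 2)/8)
    -- (AC)
    (hac1 : r 0 + r 2 = (2 - Real.sqrt 2)/8) (hac2 : r 5 + r 7 = (2 - Real.sqrt 2)/8)
    (hac3 : r 1 + r 3 = (2 + Real.sqrt 2)/8) (hac4 : r 4 + r 6 = (2 + Real.sqrt 2)/8) :
    r 2 + r 5 = (1 - Real.sqrt 2)/4 ∧ r 2 + r 5 < 0 := by
  have h2 : (1:ℝ) < Real.sqrt 2 := by
    have := Real.sqrt_lt_sqrt (by norm_num : (0:ℝ) ≤ 1) (by norm_num : (1:ℝ) < 2)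
    simpa using this
  constructor
  · linarith
  · linarith
end

section
/- Suppose Ω is a finite set, B₁,...,B₉ are nine 4-element sets of 'vectors' with each vector lying in exactly two bases, and for each vector v there is an event μ(v) ⊆ Ω such that for each basis B_i the events {μ(v) : v ∈ B_i} partition Ω (pairwise disjoint with union Ω). Then Ω is empty. -/
/-- Limitation theorem, abstract form: if nine 4-element bases of vectors,
each vector lying in exactly two bases, are modeled by events μ(v) ⊆ Ω so that
for each basis the events {μ(v) : v ∈ B i} partition Ω, then Ω is empty. -/
theorem limitation_empty {α : Type*} [DecidableEq α] (Ω : Type*) [Fintype Ω]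
    (B : Fin 9 → Finset α) (hcard : ∀ i, (B i).card = 4)
    (htwo : ∀ v ∈ Finset.univ.biUnion B,
      (Finset.univ.filter (fun i => v ∈ B i)).card = 2)
    (μ : α → Set Ω)
    (hdisj : ∀ i, ∀ v ∈ B i, ∀ w ∈ B i, v ≠ w → Disjoint (μ v) (μ w))
    (hcover : ∀ i, (⋃ v ∈ B i, μ v) = Set.univ) :
    IsEmpty Ω := by
  classical
  by_contra h
  rw [not_isEmpty_iff] at h
  obtain ⟨ω⟩ := h
  set S := (Finset.univ.biUnion B).filter (fun v => ω ∈ μ v) with hS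
  -- each basis contains exactly one vector whose event contains ω
  have h1 : ∀ i, ((B i).filter (fun v => ω ∈ μ v)).card = 1 := by
    intro i
    have hω : ω ∈ ⋃ v ∈ B i, μ v := by rw [hcover i]; trivial
    simp only [Set.mem_iUnion] at hω
    obtain ⟨v, hv, hωv⟩ := hω
    rw [Finset.card_eq_one]
    refine ⟨v, Finset.eq_singleton_iff_unique_mem.mpr ⟨Finset.mem_filter.mpr ⟨hv, hωv⟩, ?_⟩⟩
    intro w hw
    rw [Finset.mem_filter] at hw
    by_contra hne
    exact (hdisj i w hw.1 v hv hne).le_bot ⟨hw.2, hωv⟩ |>.elim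
  -- rewrite the filter in terms of S
  have h2 : ∀ i, (B i).filter (fun v => ω ∈ μ v) = S.filter (fun v => v ∈ B i) := by
    intro i
    ext v
    simp only [hS, Finset.mem_filter, Finset.mem_biUnion, Finset.mem_univ, true_and]
    constructor
    · rintro ⟨hv, hωv⟩; exact ⟨⟨⟨i, hv⟩, hωv⟩, hv⟩
    · rintro ⟨⟨_, hωv⟩, hv⟩; exact ⟨hv, hωv⟩
  -- double count
  have hL : ∑ i : Fin 9, ((B i).filter (fun v => ω ∈ μ v)).card = 9 := by
    simp [h1]
  have hR : ∑ i : Fin 9, ((B i).filter (fun v => ω ∈ μ v)).card = 2 * S.card := by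
    calc ∑ i : Fin 9, ((B i).filter (fun v => ω ∈ μ v)).card
        = ∑ i : Fin 9, ∑ v ∈ S, (if v ∈ B i then 1 else 0) := by
          simp [h2, Finset.card_filter]
      _ = ∑ v ∈ S, ∑ i : Fin 9, (if v ∈ B i then 1 else 0) := Finset.sum_comm
      _ = ∑ v ∈ S, (Finset.univ.filter (fun i => v ∈ B i)).card :=
          Finset.sum_congr rfl fun v _ => (Finset.card_filter _ _).symm
      _ = ∑ v ∈ S, 2 := by
          refine Finset.sum_congr rfl fun v hv => ?_
          exact htwo v (Finset.mem_filter.mp hv).1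
      _ = 2 * S.card := by rw [Finset.sum_const, smul_eq_mul, mul_comm]
  omega
end
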